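/- If α* = 0 and β* = 0, then C_O ⊆ C_I (so Shannon's inner and outer bounds coincide and the outer bound of the simple-outer-bound theorem reduces to C_I). -/
import Mathlib


open scoped BigOperators

/-- `P` is a probability distribution on the finite alphabet `A`. -/
def IsDist {A : Type*} [Fintype A] (P : A → ℝ) : Prop :=
  (∀ a, 0 ≤ P a) ∧ ∑ a, P a = 1

/-- Input–output mutual information 𝓘(P, W) (in bits) of a channel `W`
from the finite alphabet `A` to the finite alphabet `B` under input distribution `P`. -/
noncomputable def mutInfo {A B : Type*} [Fintype A] [Fintype B]
    (P : A → ℝ) (W : A → B → ℝ) : ℝ :=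
  ∑ a, ∑ b, P a * W a b * Real.logb 2 (W a b / ∑ a', P a' * W a' b)

/-- Shannon entropy (base 2) of a distribution on a finite alphabet. -/
noncomputable def ent {B : Type*} [Fintype B] (Q : B → ℝ) : ℝ :=
  -∑ b, Q b * Real.logb 2 (Q b)

section TWC

variable {X1 X2 Y1 Y2 : Type*} [Fintype X1] [Fintype X2] [Fintype Y1] [Fintype Y2]

/-- A joint input distribution on `X1 × X2`. -/
def IsJointDist (P : X1 → X2 → ℝ) : Prop :=
  (∀ x1 x2, 0 ≤ P x1 x2) ∧ ∑ x1, ∑ x2, P x1 x2 = 1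

/-- Marginal of a joint input distribution on `X1`. -/
noncomputable def margin1 (P : X1 → X2 → ℝ) (x1 : X1) : ℝ := ∑ x2, P x1 x2

/-- Marginal of a joint input distribution on `X2`. -/
noncomputable def margin2 (P : X1 → X2 → ℝ) (x2 : X2) : ℝ := ∑ x1, P x1 x2

/-- Conditional distribution P_{X₁|X₂=x₂}. -/
noncomputable def cond1given2 (P : X1 → X2 → ℝ) (x2 : X2) (x1 : X1) : ℝ :=
  P x1 x2 / margin2 P x2

/-- Conditional distribution P_{X₂|X₁=x₁}. -/
noncomputable def cond2given1 (P : X1 → X2 → ℝ) (x1 : X1) (x2 : X2) : ℝ :=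
  P x1 x2 / margin1 P x1

/-- The conditional mutual information I(X₁;Y₂|X₂) under the joint input distribution `P`,
where `W2` is the marginal channel P_{Y₂|X₁,X₂}. -/
noncomputable def condMI12 (P : X1 → X2 → ℝ) (W2 : X1 → X2 → Y2 → ℝ) : ℝ :=
  ∑ x2, margin2 P x2 * mutInfo (cond1given2 P x2) (fun x1 => W2 x1 x2)

/-- The conditional mutual information I(X₂;Y₁|X₁) under the joint input distribution `P`,
where `W1` is the marginal channel P_{Y₁|X₁,X₂}. -/
noncomputable def condMI21 (P : X1 → X2 → ℝ) (W1 : X1 → X2 → Y1 → ℝ) : ℝ :=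
  ∑ x1, margin1 P x1 * mutInfo (cond2given1 P x1) (fun x2 => W1 x1 x2)

/-- The rate region 𝓡(P_{X₁,X₂}). -/
noncomputable def rateRegion (W1 : X1 → X2 → Y1 → ℝ) (W2 : X1 → X2 → Y2 → ℝ)
    (P : X1 → X2 → ℝ) : Set (ℝ × ℝ) :=
  {r | 0 ≤ r.1 ∧ r.1 ≤ condMI12 P W2 ∧ 0 ≤ r.2 ∧ r.2 ≤ condMI21 P W1}

/-- Shannon's inner bound C_I: the closure of the convex hull of the union of the
rate regions of all product input distributions. -/
noncomputable def innerBound (W1 : X1 → X2 → Y1 → ℝ) (W2 : X1 → X2 → Y2 → ℝ) :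
    Set (ℝ × ℝ) :=
  closure (convexHull ℝ
    (⋃ P ∈ {P : X1 → X2 → ℝ |
        ∃ P1 P2, IsDist P1 ∧ IsDist P2 ∧ P = fun x1 x2 => P1 x1 * P2 x2},
      rateRegion W1 W2 P))

/-- Shannon's outer bound C_O: the union of the rate regions of all joint input
distributions. -/
noncomputable def outerBound (W1 : X1 → X2 → Y1 → ℝ) (W2 : X1 → X2 → Y2 → ℝ) :
    Set (ℝ × ℝ) :=
  ⋃ P ∈ {P : X1 → X2 → ℝ | IsJointDist P}, rateRegion W1 W2 P

/-- The largest input–output mutual information of the one-way channel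
P_{Y₂|X₁,X₂=x₂}. -/
noncomputable def capAt (W2 : X1 → X2 → Y2 → ℝ) (x2 : X2) : ℝ :=
  sSup {I | ∃ P : X1 → ℝ, IsDist P ∧ I = mutInfo P (fun x1 => W2 x1 x2)}

/-- α*: how close the channels {P_{Y₂|X₁,X₂=x₂}} are to having a common optimal
input distribution. -/
noncomputable def alphaStar (W2 : X1 → X2 → Y2 → ℝ) : ℝ :=
  sInf {a | ∃ Pt : X1 → ℝ, IsDist Pt ∧
    a = ⨆ x2, |mutInfo Pt (fun x1 => W2 x1 x2) - capAt W2 x2|}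

/-- β*: the degree of invariance in the input–output mutual information of the
channels {P_{Y₁|X₁=x₁,X₂}}. -/
noncomputable def betaStar (W1 : X1 → X2 → Y1 → ℝ) : ℝ :=
  sSup {b | ∃ (P : X2 → ℝ) (x1 x1' : X1), IsDist P ∧ x1 ≠ x1' ∧
    b = |mutInfo P (fun x2 => W1 x1 x2) - mutInfo P (fun x2 => W1 x1' x2)|}

/-- I*₁ = max_{x₂} max_{P} 𝓘(P, P_{Y₂|X₁,X₂=x₂}). -/
noncomputable def IStar1 (W2 : X1 → X2 → Y2 → ℝ) : ℝ :=
  sSup {I | ∃ (x2 : X2) (P : X1 → ℝ), IsDist P ∧ I = mutInfo P (fun x1 => W2 x1 x2)}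

/-- I*₂ = max_{x₁} max_{P} 𝓘(P, P_{Y₁|X₁=x₁,X₂}). -/
noncomputable def IStar2 (W1 : X1 → X2 → Y1 → ℝ) : ℝ :=
  sSup {I | ∃ (x1 : X1) (P : X2 → ℝ), IsDist P ∧ I = mutInfo P (fun x2 => W1 x1 x2)}

/-- Condition (a): `Pstar` is a common optimal input distribution for the channels
{P_{Y₂|X₁,X₂=x₂} : x₂ ∈ 𝒳₂}. -/
def CondA (W2 : X1 → X2 → Y2 → ℝ) (Pstar : X1 → ℝ) : Prop :=
  IsDist Pstar ∧ ∀ x2 : X2, ∀ P : X1 → ℝ, IsDist P →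
    mutInfo P (fun x1 => W2 x1 x2) ≤ mutInfo Pstar (fun x1 => W2 x1 x2)

/-- Condition (b1): for every input distribution on 𝒳₂, the input–output mutual
information of P_{Y₁|X₁=x₁,X₂} does not depend on x₁. -/
def CondB1 (W1 : X1 → X2 → Y1 → ℝ) : Prop :=
  ∀ P : X2 → ℝ, IsDist P → ∀ x1 x1' : X1,
    mutInfo P (fun x2 => W1 x1 x2) = mutInfo P (fun x2 => W1 x1' x2)

/-- H(Y₁|X₁,X₂) under the joint input distribution `P`. -/
noncomputable def condEntFull (P : X1 → X2 → ℝ) (W1 : X1 → X2 → Y1 → ℝ) : ℝ :=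
  ∑ x1, ∑ x2, P x1 x2 * ent (W1 x1 x2)

/-- H(Y₁|X₁) under the joint input distribution `P`. -/
noncomputable def condEntY1X1 (P : X1 → X2 → ℝ) (W1 : X1 → X2 → Y1 → ℝ) : ℝ :=
  ∑ x1, margin1 P x1 * ent (fun y1 => ∑ x2, cond2given1 P x1 x2 * W1 x1 x2 y1)

/-- Condition (b2), part (i): H(Y₁|X₁,X₂) depends on the joint input distribution
only through its marginal on 𝒳₂. -/
def CondB2i (W1 : X1 → X2 → Y1 → ℝ) : Prop :=
  ∀ P Q : X1 → X2 → ℝ, IsJointDist P → IsJointDist Q →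
    margin2 P = margin2 Q → condEntFull P W1 = condEntFull Q W1

/-- Condition (b2), part (ii), relative to the common optimal input `Pstar`:
H⁽¹⁾(Y₁|X₁) ≤ H⁽²⁾(Y₁|X₁) where P⁽²⁾ = P*_{X₁}·P⁽¹⁾_{X₂}. -/
def CondB2ii (W1 : X1 → X2 → Y1 → ℝ) (Pstar : X1 → ℝ) : Prop :=
  ∀ P : X1 → X2 → ℝ, IsJointDist P →
    condEntY1X1 P W1 ≤ condEntY1X1 (fun x1 x2 => Pstar x1 * margin2 P x2) W1



section Aux

lemma ent_eq {B : Type*} [Fintype B] (q : B → ℝ) :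
    ent q = (∑ b, Real.negMulLog (q b)) / Real.log 2 := by
  unfold ent
  rw [Finset.sum_div, ← Finset.sum_neg_distrib]
  refine Finset.sum_congr rfl fun b _ => ?_
  rw [Real.negMulLog, Real.logb]
  ring

lemma ent_jensen {ι B : Type*} [Fintype ι] [Fintype B] (w : ι → ℝ) (v : ι → B → ℝ)
    (hw : ∀ i, 0 ≤ w i) (hw1 : ∑ i, w i = 1) (hv : ∀ i b, 0 ≤ v i b) :
    ∑ i, w i * ent (v i) ≤ ent (fun b => ∑ i, w i * v i b) := by
  have hL : (0:ℝ) < Real.log 2 := Real.log_pos one_lt_two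
  have key : ∀ b : B, ∑ i, w i * Real.negMulLog (v i b)
      ≤ Real.negMulLog (∑ i, w i * v i b) := by
    intro b
    have := Real.concaveOn_negMulLog.le_map_sum (t := Finset.univ) (w := w)
      (p := fun i => v i b) (fun i _ => hw i) hw1 (fun i _ => Set.mem_Ici.2 (hv i b))
    simpa using this
  simp only [ent_eq]
  have lhs_eq : ∑ i, w i * ((∑ b, Real.negMulLog (v i b)) / Real.log 2)
      = (∑ b, ∑ i, w i * Real.negMulLog (v i b)) / Real.log 2 := by
    rw [← Finset.sum_comm, Finset.sum_div]
    refine Finset.sum_congr rfl fun i _ => ?_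
    rw [← Finset.mul_sum, mul_div_assoc]
  rw [lhs_eq]
  exact (div_le_div_iff_of_pos_right hL).mpr (Finset.sum_le_sum fun b _ => key b)

lemma ent_nonneg' {B : Type*} [Fintype B] (q : B → ℝ) (h0 : ∀ b, 0 ≤ q b)
    (h1 : ∀ b, q b ≤ 1) : 0 ≤ ent q := by
  rw [ent_eq]
  apply div_nonneg _ (Real.log_nonneg one_le_two)
  exact Finset.sum_nonneg fun b _ => Real.negMulLog_nonneg (h0 b) (h1 b)

lemma negMulLog_le_inv_exp {x : ℝ} (hx : 0 ≤ x) : Real.negMulLog x ≤ (Real.exp 1)⁻¹ := by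
  rcases eq_or_lt_of_le hx with h | h
  · simp [← h, Real.negMulLog]
    positivity
  · have h1 : Real.log ((Real.exp 1 * x)⁻¹) ≤ (Real.exp 1 * x)⁻¹ - 1 :=
      Real.log_le_sub_one_of_pos (by positivity)
    have h2 : Real.log ((Real.exp 1 * x)⁻¹) = -(1 + Real.log x) := by
      rw [Real.log_inv, Real.log_mul (Real.exp_pos 1).ne' h.ne', Real.log_exp]
    rw [h2] at h1
    have h3 : x * (-(1 + Real.log x)) ≤ x * ((Real.exp 1 * x)⁻¹ - 1) :=
      mul_le_mul_of_nonneg_left h1 hx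
    have h4 : x * ((Real.exp 1 * x)⁻¹ - 1) = (Real.exp 1)⁻¹ - x := by
      field_simp
    rw [h4] at h3
    rw [Real.negMulLog]
    nlinarith

lemma ent_le' {B : Type*} [Fintype B] (q : B → ℝ) (h0 : ∀ b, 0 ≤ q b) :
    ent q ≤ (Fintype.card B : ℝ) * (Real.exp 1)⁻¹ / Real.log 2 := by
  rw [ent_eq]
  refine (div_le_div_iff_of_pos_right (Real.log_pos one_lt_two)).mpr ?_
  calc ∑ b, Real.negMulLog (q b) ≤ ∑ _b : B, (Real.exp 1)⁻¹ :=
        Finset.sum_le_sum fun b _ => negMulLog_le_inv_exp (h0 b)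
    _ = (Fintype.card B : ℝ) * (Real.exp 1)⁻¹ := by
        rw [Finset.sum_const, Finset.card_univ, nsmul_eq_mul]

lemma mutInfo_eq {A B : Type*} [Fintype A] [Fintype B] (p : A → ℝ) (W : A → B → ℝ)
    (hp : ∀ a, 0 ≤ p a) (hW : ∀ a b, 0 ≤ W a b) :
    mutInfo p W = ent (fun b => ∑ a, p a * W a b) - ∑ a, p a * ent (W a) := by
  have key : ∀ a b, p a * W a b * Real.logb 2 (W a b / ∑ a', p a' * W a' b)
      = p a * W a b * Real.logb 2 (W a b)
        - p a * W a b * Real.logb 2 (∑ a', p a' * W a' b) := by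
    intro a b
    rcases eq_or_lt_of_le (hp a) with h | hpa
    · simp [← h]
    rcases eq_or_lt_of_le (hW a b) with h | hwab
    · simp [← h]
    have hQ : 0 < ∑ a', p a' * W a' b := by
      have hle : p a * W a b ≤ ∑ a', p a' * W a' b :=
        Finset.single_le_sum (fun a' _ => mul_nonneg (hp a') (hW a' b)) (Finset.mem_univ a)
      nlinarith
    rw [Real.logb_div hwab.ne' hQ.ne']
    ring
  unfold mutInfo
  simp only [key]
  simp only [Finset.sum_sub_distrib]
  have h1 : ∑ a, ∑ b, p a * W a b * Real.logb 2 (W a b) = -∑ a, p a * ent (W a) := by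
    rw [← Finset.sum_neg_distrib]
    refine Finset.sum_congr rfl fun a _ => ?_
    unfold ent
    rw [mul_neg, neg_neg, Finset.mul_sum]
    exact Finset.sum_congr rfl fun b _ => mul_assoc _ _ _
  have h2 : ∑ a, ∑ b, p a * W a b * Real.logb 2 (∑ a', p a' * W a' b)
      = -ent (fun b => ∑ a, p a * W a b) := by
    rw [Finset.sum_comm]
    unfold ent
    rw [neg_neg]
    refine Finset.sum_congr rfl fun b _ => ?_
    rw [← Finset.sum_mul]
  rw [h1, h2]
  ring

lemma mutInfo_nonneg {A B : Type*} [Fintype A] [Fintype B] (p : A → ℝ) (W : A → B → ℝ)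
    (hp : IsDist p) (hW : ∀ a, IsDist (W a)) : 0 ≤ mutInfo p W := by
  rw [mutInfo_eq p W hp.1 (fun a b => (hW a).1 b)]
  have := ent_jensen p W hp.1 hp.2 (fun a b => (hW a).1 b)
  linarith

lemma mutInfo_le {A B : Type*} [Fintype A] [Fintype B] (p : A → ℝ) (W : A → B → ℝ)
    (hp : IsDist p) (hW : ∀ a, IsDist (W a)) :
    mutInfo p W ≤ (Fintype.card B : ℝ) * (Real.exp 1)⁻¹ / Real.log 2 := by
  rw [mutInfo_eq p W hp.1 (fun a b => (hW a).1 b)]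
  have h1 : 0 ≤ ∑ a, p a * ent (W a) := by
    refine Finset.sum_nonneg fun a _ => mul_nonneg (hp.1 a) ?_
    refine ent_nonneg' _ (hW a).1 fun b => ?_
    calc W a b ≤ ∑ b', W a b' :=
          Finset.single_le_sum (fun b' _ => (hW a).1 b') (Finset.mem_univ b)
      _ = 1 := (hW a).2
  have h2 := ent_le' (fun b => ∑ a, p a * W a b)
    (fun b => Finset.sum_nonneg fun a _ => mul_nonneg (hp.1 a) ((hW a).1 b))
  linarith

lemma mutInfo_concave {ι A B : Type*} [Fintype ι] [Fintype A] [Fintype B]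
    (w : ι → ℝ) (p : ι → A → ℝ) (W : A → B → ℝ)
    (hw : ∀ i, 0 ≤ w i) (hw1 : ∑ i, w i = 1) (hp : ∀ i a, 0 ≤ p i a)
    (hW : ∀ a b, 0 ≤ W a b) :
    ∑ i, w i * mutInfo (p i) W ≤ mutInfo (fun a => ∑ i, w i * p i a) W := by
  have hmix : ∀ a, 0 ≤ ∑ i, w i * p i a :=
    fun a => Finset.sum_nonneg fun i _ => mul_nonneg (hw i) (hp i a)
  rw [mutInfo_eq _ W hmix hW]
  have heq : ∀ i, mutInfo (p i) W
      = ent (fun b => ∑ a, p i a * W a b) - ∑ a, p i a * ent (W a) :=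
    fun i => mutInfo_eq (p i) W (hp i) hW
  simp only [heq, mul_sub]
  rw [Finset.sum_sub_distrib]
  have hlin : ∑ i, w i * ∑ a, p i a * ent (W a)
      = ∑ a, (∑ i, w i * p i a) * ent (W a) := by
    simp only [Finset.mul_sum, Finset.sum_mul]
    rw [Finset.sum_comm]
    exact Finset.sum_congr rfl fun a _ => Finset.sum_congr rfl fun i _ => by ring
  have hQ : (fun b => ∑ a, (∑ i, w i * p i a) * W a b)
      = fun b => ∑ i, w i * ∑ a, p i a * W a b := by
    funext b
    simp only [Finset.mul_sum, Finset.sum_mul]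
    rw [Finset.sum_comm]
    exact Finset.sum_congr rfl fun i _ => Finset.sum_congr rfl fun a _ => by ring
  have hjen := ent_jensen w (fun i b => ∑ a, p i a * W a b) hw hw1
    (fun i b => Finset.sum_nonneg fun a _ => mul_nonneg (hp i a) (hW a b))
  have hqe : ent (fun b => ∑ a, (∑ i, w i * p i a) * W a b)
      = ent (fun b => ∑ i, w i * ∑ a, p i a * W a b) := congrArg ent hQ
  rw [hlin, hqe]
  have hj : ∑ i, w i * ent (fun b => ∑ a, p i a * W a b)
      ≤ ent (fun b => ∑ i, w i * ∑ a, p i a * W a b) := hjen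
  linarith

lemma isDist_uniform {A : Type*} [Fintype A] [Nonempty A] :
    IsDist (fun _ : A => (Fintype.card A : ℝ)⁻¹) := by
  constructor
  · intro a; positivity
  · rw [Finset.sum_const, Finset.card_univ, nsmul_eq_mul, mul_inv_cancel₀]
    exact_mod_cast Fintype.card_ne_zero

end Aux

section Aux2

variable {X1 X2 Y1 Y2 : Type*} [Fintype X1] [Fintype X2] [Fintype Y1] [Fintype Y2]

lemma margin1_nonneg (P : X1 → X2 → ℝ) (hP : IsJointDist P) (x1 : X1) :
    0 ≤ margin1 P x1 := Finset.sum_nonneg fun x2 _ => hP.1 x1 x2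

lemma margin2_nonneg (P : X1 → X2 → ℝ) (hP : IsJointDist P) (x2 : X2) :
    0 ≤ margin2 P x2 := Finset.sum_nonneg fun x1 _ => hP.1 x1 x2

lemma sum_margin1 (P : X1 → X2 → ℝ) (hP : IsJointDist P) : ∑ x1, margin1 P x1 = 1 := hP.2

lemma sum_margin2 (P : X1 → X2 → ℝ) (hP : IsJointDist P) : ∑ x2, margin2 P x2 = 1 := by
  unfold margin2
  rw [Finset.sum_comm]
  exact hP.2

lemma eq_zero_of_margin1 (P : X1 → X2 → ℝ) (hP : IsJointDist P) (x1 : X1)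
    (h : margin1 P x1 = 0) (x2 : X2) : P x1 x2 = 0 :=
  (Finset.sum_eq_zero_iff_of_nonneg (fun x2 _ => hP.1 x1 x2)).1 h x2 (Finset.mem_univ x2)

lemma eq_zero_of_margin2 (P : X1 → X2 → ℝ) (hP : IsJointDist P) (x2 : X2)
    (h : margin2 P x2 = 0) (x1 : X1) : P x1 x2 = 0 :=
  (Finset.sum_eq_zero_iff_of_nonneg (fun x1 _ => hP.1 x1 x2)).1 h x1 (Finset.mem_univ x1)

lemma isDist_cond1given2 (P : X1 → X2 → ℝ) (hP : IsJointDist P) (x2 : X2)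
    (h : margin2 P x2 ≠ 0) : IsDist (cond1given2 P x2) := by
  constructor
  · intro x1
    exact div_nonneg (hP.1 x1 x2) (margin2_nonneg P hP x2)
  · unfold cond1given2
    rw [← Finset.sum_div]
    exact div_self h

lemma isDist_cond2given1 (P : X1 → X2 → ℝ) (hP : IsJointDist P) (x1 : X1)
    (h : margin1 P x1 ≠ 0) : IsDist (cond2given1 P x1) := by
  constructor
  · intro x2
    exact div_nonneg (hP.1 x1 x2) (margin1_nonneg P hP x1)
  · unfold cond2given1
    rw [← Finset.sum_div]
    exact div_self h

lemma margin1_prod (P1 : X1 → ℝ) (P2 : X2 → ℝ) (h2 : ∑ x2, P2 x2 = 1) (x1 : X1) :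
    margin1 (fun x1 x2 => P1 x1 * P2 x2) x1 = P1 x1 := by
  unfold margin1
  rw [← Finset.mul_sum, h2, mul_one]

lemma margin2_prod (P1 : X1 → ℝ) (P2 : X2 → ℝ) (h1 : ∑ x1, P1 x1 = 1) (x2 : X2) :
    margin2 (fun x1 x2 => P1 x1 * P2 x2) x2 = P2 x2 := by
  unfold margin2
  rw [← Finset.sum_mul, h1, one_mul]

lemma condMI12_prod (W2 : X1 → X2 → Y2 → ℝ) (P1 : X1 → ℝ) (P2 : X2 → ℝ)
    (hP1 : IsDist P1) :
    condMI12 (fun x1 x2 => P1 x1 * P2 x2) W2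
      = ∑ x2, P2 x2 * mutInfo P1 (fun x1 => W2 x1 x2) := by
  unfold condMI12
  refine Finset.sum_congr rfl fun x2 _ => ?_
  rw [margin2_prod P1 P2 hP1.2 x2]
  by_cases h : P2 x2 = 0
  · rw [h, zero_mul, zero_mul]
  · have hc : cond1given2 (fun x1 x2 => P1 x1 * P2 x2) x2 = P1 := by
      funext x1
      unfold cond1given2
      rw [margin2_prod P1 P2 hP1.2 x2, mul_div_assoc, div_self h, mul_one]
    rw [hc]

lemma condMI21_prod (W1 : X1 → X2 → Y1 → ℝ) (P1 : X1 → ℝ) (P2 : X2 → ℝ)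
    (hP2 : IsDist P2) :
    condMI21 (fun x1 x2 => P1 x1 * P2 x2) W1
      = ∑ x1, P1 x1 * mutInfo P2 (fun x2 => W1 x1 x2) := by
  unfold condMI21
  refine Finset.sum_congr rfl fun x1 _ => ?_
  rw [margin1_prod P1 P2 hP2.2 x1]
  by_cases h : P1 x1 = 0
  · rw [h, zero_mul, zero_mul]
  · have hc : cond2given1 (fun x1 x2 => P1 x1 * P2 x2) x1 = P2 := by
      funext x2
      unfold cond2given1
      rw [margin1_prod P1 P2 hP2.2 x1]
      show P1 x1 * P2 x2 / P1 x1 = P2 x2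
      rw [mul_comm, mul_div_assoc, div_self h, mul_one]
    rw [hc]

lemma capAt_bddAbove (W2 : X1 → X2 → Y2 → ℝ) (hW2 : ∀ x1 x2, IsDist (W2 x1 x2)) (x2 : X2) :
    BddAbove {I | ∃ P : X1 → ℝ, IsDist P ∧ I = mutInfo P (fun x1 => W2 x1 x2)} := by
  refine ⟨(Fintype.card Y2 : ℝ) * (Real.exp 1)⁻¹ / Real.log 2, ?_⟩
  rintro I ⟨P, hP, rfl⟩
  exact mutInfo_le P _ hP (fun x1 => hW2 x1 x2)

lemma le_capAt (W2 : X1 → X2 → Y2 → ℝ) (hW2 : ∀ x1 x2, IsDist (W2 x1 x2)) (x2 : X2)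
    (P : X1 → ℝ) (hP : IsDist P) :
    mutInfo P (fun x1 => W2 x1 x2) ≤ capAt W2 x2 :=
  le_csSup (capAt_bddAbove W2 hW2 x2) ⟨P, hP, rfl⟩

lemma condB1_of_beta (W1 : X1 → X2 → Y1 → ℝ) (hW1 : ∀ x1 x2, IsDist (W1 x1 x2))
    (hβ : betaStar W1 = 0) : CondB1 W1 := by
  intro P hP x1 x1'
  by_cases h : x1 = x1'
  · rw [h]
  have hM : (0:ℝ) ≤ (Fintype.card Y1 : ℝ) * (Real.exp 1)⁻¹ / Real.log 2 := by
    have := Real.log_nonneg one_le_two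
    positivity
  have hbdd : BddAbove {b | ∃ (P : X2 → ℝ) (x1 x1' : X1), IsDist P ∧ x1 ≠ x1' ∧
      b = |mutInfo P (fun x2 => W1 x1 x2) - mutInfo P (fun x2 => W1 x1' x2)|} := by
    refine ⟨(Fintype.card Y1 : ℝ) * (Real.exp 1)⁻¹ / Real.log 2, ?_⟩
    rintro b ⟨Q, a, a', hQ, hne, rfl⟩
    have h1 := mutInfo_le Q _ hQ (fun x2 => hW1 a x2)
    have h2 := mutInfo_le Q _ hQ (fun x2 => hW1 a' x2)
    have h3 := mutInfo_nonneg Q _ hQ (fun x2 => hW1 a x2)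
    have h4 := mutInfo_nonneg Q _ hQ (fun x2 => hW1 a' x2)
    exact abs_le.mpr ⟨by linarith, by linarith⟩
  have hmem : |mutInfo P (fun x2 => W1 x1 x2) - mutInfo P (fun x2 => W1 x1' x2)|
      ∈ {b | ∃ (P : X2 → ℝ) (x1 x1' : X1), IsDist P ∧ x1 ≠ x1' ∧
      b = |mutInfo P (fun x2 => W1 x1 x2) - mutInfo P (fun x2 => W1 x1' x2)|} :=
    ⟨P, x1, x1', hP, h, rfl⟩
  have hle : |mutInfo P (fun x2 => W1 x1 x2) - mutInfo P (fun x2 => W1 x1' x2)|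
      ≤ betaStar W1 := le_csSup hbdd hmem
  rw [hβ] at hle
  have h0 : |mutInfo P (fun x2 => W1 x1 x2) - mutInfo P (fun x2 => W1 x1' x2)| = 0 :=
    le_antisymm hle (abs_nonneg _)
  exact sub_eq_zero.mp (abs_eq_zero.mp h0)

lemma alpha_extract [Nonempty X1] [Nonempty X2] (W2 : X1 → X2 → Y2 → ℝ)
    (hα : alphaStar W2 = 0) {ε : ℝ} (hε : 0 < ε) :
    ∃ Pt : X1 → ℝ, IsDist Pt ∧
      ∀ x2, |mutInfo Pt (fun x1 => W2 x1 x2) - capAt W2 x2| < ε := by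
  have hne : Set.Nonempty {a | ∃ Pt : X1 → ℝ, IsDist Pt ∧
      a = ⨆ x2, |mutInfo Pt (fun x1 => W2 x1 x2) - capAt W2 x2|} :=
    ⟨_, (fun _ : X1 => (Fintype.card X1 : ℝ)⁻¹), isDist_uniform, rfl⟩
  have hbdd : BddBelow {a | ∃ Pt : X1 → ℝ, IsDist Pt ∧
      a = ⨆ x2, |mutInfo Pt (fun x1 => W2 x1 x2) - capAt W2 x2|} := by
    refine ⟨0, ?_⟩
    rintro a ⟨Pt, hPt, rfl⟩
    have x2 : X2 := Classical.arbitrary X2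
    calc (0:ℝ) ≤ |mutInfo Pt (fun x1 => W2 x1 x2) - capAt W2 x2| := abs_nonneg _
      _ ≤ ⨆ x2, |mutInfo Pt (fun x1 => W2 x1 x2) - capAt W2 x2| :=
          le_ciSup (f := fun z => |mutInfo Pt (fun x1 => W2 x1 z) - capAt W2 z|)
            (Finite.bddAbove_range _) x2
  have hlt : sInf {a | ∃ Pt : X1 → ℝ, IsDist Pt ∧
      a = ⨆ x2, |mutInfo Pt (fun x1 => W2 x1 x2) - capAt W2 x2|} < ε := by
    have : alphaStar W2 < ε := by rw [hα]; exact hε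
    exact this
  obtain ⟨a, ⟨Pt, hPt, rfl⟩, ha⟩ := (csInf_lt_iff hbdd hne).1 hlt
  exact ⟨Pt, hPt, fun x2 =>
    lt_of_le_of_lt (le_ciSup (f := fun z => |mutInfo Pt (fun x1 => W2 x1 z) - capAt W2 z|)
      (Finite.bddAbove_range _) x2) ha⟩

lemma condMI12_le (W2 : X1 → X2 → Y2 → ℝ) (hW2 : ∀ x1 x2, IsDist (W2 x1 x2))
    (P : X1 → X2 → ℝ) (hP : IsJointDist P) :
    condMI12 P W2 ≤ ∑ x2, margin2 P x2 * capAt W2 x2 := by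
  refine Finset.sum_le_sum fun x2 _ => ?_
  by_cases h : margin2 P x2 = 0
  · rw [h, zero_mul, zero_mul]
  · exact mul_le_mul_of_nonneg_left
      (le_capAt W2 hW2 x2 _ (isDist_cond1given2 P hP x2 h)) (margin2_nonneg P hP x2)

lemma condMI21_le (W1 : X1 → X2 → Y1 → ℝ) (hW1 : ∀ x1 x2, IsDist (W1 x1 x2))
    (P : X1 → X2 → ℝ) (hP : IsJointDist P) (hB1 : CondB1 W1) (x10 : X1) :
    condMI21 P W1 ≤ mutInfo (margin2 P) (fun x2 => W1 x10 x2) := by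
  have step1 : condMI21 P W1
      = ∑ x1, margin1 P x1 * mutInfo (cond2given1 P x1) (fun x2 => W1 x10 x2) := by
    unfold condMI21
    refine Finset.sum_congr rfl fun x1 _ => ?_
    by_cases h : margin1 P x1 = 0
    · rw [h, zero_mul, zero_mul]
    · rw [hB1 (cond2given1 P x1) (isDist_cond2given1 P hP x1 h) x1 x10]
  rw [step1]
  have hcc := mutInfo_concave (margin1 P) (cond2given1 P) (fun x2 => W1 x10 x2)
    (margin1_nonneg P hP) (sum_margin1 P hP)
    (fun x1 x2 => div_nonneg (hP.1 x1 x2) (margin1_nonneg P hP x1))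
    (fun x2 y1 => (hW1 x10 x2).1 y1)
  have hmix : (fun x2 => ∑ x1, margin1 P x1 * cond2given1 P x1 x2) = margin2 P := by
    funext x2
    unfold margin2
    refine Finset.sum_congr rfl fun x1 _ => ?_
    by_cases h : margin1 P x1 = 0
    · rw [h, zero_mul, eq_zero_of_margin1 P hP x1 h x2]
    · unfold cond2given1
      rw [mul_comm, div_mul_cancel₀ _ h]
  rwa [hmix] at hcc

end Aux2

/-- if α* = 0 and β* = 0 then C_O ⊆ C_I. -/
theorem stmt13 [Nonempty X1] [Nonempty X2]
    (W1 : X1 → X2 → Y1 → ℝ) (W2 : X1 → X2 → Y2 → ℝ)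
    (hW1 : ∀ x1 x2, IsDist (W1 x1 x2)) (hW2 : ∀ x1 x2, IsDist (W2 x1 x2))
    (hα : alphaStar W2 = 0) (hβ : betaStar W1 = 0) :
    outerBound W1 W2 ⊆ innerBound W1 W2 := by
  intro r hr
  simp only [outerBound, Set.mem_iUnion, Set.mem_setOf_eq] at hr
  obtain ⟨P, hP, hr1, hr1', hr2, hr2'⟩ := hr
  have hB1 : CondB1 W1 := condB1_of_beta W1 hW1 hβ
  have hP2 : IsDist (margin2 P) := ⟨margin2_nonneg P hP, sum_margin2 P hP⟩
  have x10 : X1 := Classical.arbitrary X1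
  have hrS : r.1 ≤ ∑ x2, margin2 P x2 * capAt W2 x2 :=
    hr1'.trans (condMI12_le W2 hW2 P hP)
  have hrC : r.2 ≤ mutInfo (margin2 P) (fun x2 => W1 x10 x2) :=
    hr2'.trans (condMI21_le W1 hW1 P hP hB1 x10)
  show r ∈ closure _
  rw [Metric.mem_closure_iff]
  intro ε hε
  obtain ⟨Pt, hPt, hPt2⟩ := alpha_extract W2 hα (half_pos hε)
  set Q : X1 → X2 → ℝ := fun x1 x2 => Pt x1 * margin2 P x2 with hQdef
  have hc_eq : condMI12 Q W2 = ∑ x2, margin2 P x2 * mutInfo Pt (fun x1 => W2 x1 x2) :=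
    condMI12_prod W2 Pt (margin2 P) hPt
  have hc0 : 0 ≤ condMI12 Q W2 := by
    rw [hc_eq]
    exact Finset.sum_nonneg fun x2 _ => mul_nonneg (margin2_nonneg P hP x2)
      (mutInfo_nonneg Pt _ hPt (fun x1 => hW2 x1 x2))
  have hcS : (∑ x2, margin2 P x2 * capAt W2 x2) - ε/2 ≤ condMI12 Q W2 := by
    rw [hc_eq]
    have h1 : ∀ x2, margin2 P x2 * capAt W2 x2 - margin2 P x2 * (ε/2)
        ≤ margin2 P x2 * mutInfo Pt (fun x1 => W2 x1 x2) := by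
      intro x2
      rw [← mul_sub]
      refine mul_le_mul_of_nonneg_left ?_ (margin2_nonneg P hP x2)
      have habs := abs_lt.mp (hPt2 x2)
      linarith [habs.1]
    calc (∑ x2, margin2 P x2 * capAt W2 x2) - ε/2
        = ∑ x2, (margin2 P x2 * capAt W2 x2 - margin2 P x2 * (ε/2)) := by
          rw [Finset.sum_sub_distrib, ← Finset.sum_mul, hP2.2, one_mul]
      _ ≤ _ := Finset.sum_le_sum fun x2 _ => h1 x2
  have hcC : condMI21 Q W1 = mutInfo (margin2 P) (fun x2 => W1 x10 x2) := by
    rw [condMI21_prod W1 Pt (margin2 P) hP2]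
    calc ∑ x1, Pt x1 * mutInfo (margin2 P) (fun x2 => W1 x1 x2)
        = ∑ x1, Pt x1 * mutInfo (margin2 P) (fun x2 => W1 x10 x2) :=
          Finset.sum_congr rfl fun x1 _ => by rw [hB1 (margin2 P) hP2 x1 x10]
      _ = mutInfo (margin2 P) (fun x2 => W1 x10 x2) := by
          rw [← Finset.sum_mul, hPt.2, one_mul]
  refine ⟨(min r.1 (condMI12 Q W2), r.2), ?_, ?_⟩
  · apply subset_convexHull
    refine Set.mem_iUnion₂.2 ⟨Q, ⟨Pt, margin2 P, hPt, hP2, rfl⟩, ?_⟩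
    exact ⟨le_min hr1 hc0, min_le_right _ _, hr2, by rw [hcC]; exact hrC⟩
  · rw [Prod.dist_eq]
    have hd2 : dist r.2 r.2 = 0 := dist_self _
    have hmin : r.1 - ε/2 ≤ min r.1 (condMI12 Q W2) :=
      le_min (by linarith) (by linarith)
    have hmin' : min r.1 (condMI12 Q W2) ≤ r.1 := min_le_left _ _
    have hd1 : dist r.1 (min r.1 (condMI12 Q W2)) < ε := by
      rw [Real.dist_eq]
      rw [abs_lt]
      constructor <;> linarith
    rw [hd2]
    exact max_lt hd1 hε

end TWC
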